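/- arXiv:1402.3970 — 9 statements merged into one kernel-verified Lean document; each statement's English description precedes it below -/
import Mathlib

section
/- If n is even and a, b : Fin n → ZMod n are both bijections (permutations of ZMod n), then the pointwise sum i ↦ a i + b i is not a bijection. -/
lemma sum_univ_zmod (n : ℕ) [NeZero n] :
    ∑ x : ZMod n, x = ((∑ i ∈ Finset.range n, i : ℕ) : ZMod n) := by
  push_cast
  apply Finset.sum_nbij' (fun x => ZMod.val x) (fun i => (i : ZMod n))
  · intro x _; simpa using ZMod.val_lt x
  · intro i _; simp
  · intro x _; simp [ZMod.natCast_val, ZMod.cast_id]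
  · intro i hi; simp at hi; exact ZMod.val_cast_of_lt hi
  · intro x _; simp

theorem stmt0 (n : ℕ) (hn : Even n) (a b : Fin n → ZMod n)
    (ha : Function.Bijective a) (hb : Function.Bijective b) :
    ¬ Function.Bijective (fun i => a i + b i) := by
  obtain ⟨m, rfl⟩ := hn
  rcases Nat.eq_zero_or_pos m with rfl | hm
  · intro _
    exact absurd (Finite.of_surjective a ha.2) (by simp [ZMod]; infer_instance)
  intro hc
  haveI : NeZero (m + m) := ⟨by omega⟩
  have sa : ∑ i, a i = ∑ x : ZMod (m + m), x := Fintype.sum_bijective a ha _ id fun _ => rfl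
  have sb : ∑ i, b i = ∑ x : ZMod (m + m), x := Fintype.sum_bijective b hb _ id fun _ => rfl
  have sc : ∑ i, (a i + b i) = ∑ x : ZMod (m + m), x :=
    Fintype.sum_bijective _ hc _ id fun _ => rfl
  rw [Finset.sum_add_distrib, sa, sb] at sc
  have hS : (∑ x : ZMod (m + m), x) = 0 := by linear_combination sc
  rw [sum_univ_zmod] at hS
  rw [Finset.sum_range_id] at hS
  have h2 : (m + m) * (m + m - 1) / 2 = m * (m + m - 1) := by
    rw [show (m + m) * (m + m - 1) = 2 * (m * (m + m - 1)) by ring]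
    exact Nat.mul_div_cancel_left _ (by norm_num)
  rw [h2] at hS
  have : ((m * (m + m - 1) : ℕ) : ZMod (m + m)) = ((m : ℕ) : ZMod (m+m)) * (m + m - 1 : ℕ) := by
    push_cast; ring
  rw [this] at hS
  have hneg : ((m + m - 1 : ℕ) : ZMod (m + m)) = -1 := by
    have he : ((m + m - 1 : ℕ) : ZMod (m + m)) + ((1:ℕ) : ZMod (m+m)) = ((m + m : ℕ) : ZMod (m+m)) := by
      rw [← Nat.cast_add]; congr 1; omega
    rw [ZMod.natCast_self, Nat.cast_one] at he
    linear_combination he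
  rw [hneg] at hS
  have hm0 : ((m : ℕ) : ZMod (m + m)) = 0 := by linear_combination -hS
  have := ZMod.val_cast_of_lt (show m < m + m by omega)
  rw [hm0, ZMod.val_zero] at this
  omega
end

section
/- If the edges of the complete graph on a finite vertex set V with |V| = n ≥ 2 are colored with k colors such that for each color, the set of edges of that color forms a bipartite subgraph, then n ≤ 2^k. -/
theorem stmt1 {V : Type*} [Fintype V] (n k : ℕ) (hn : Fintype.card V = n) (h2 : 2 ≤ n)
    (c : V → V → Fin k) (hsymm : ∀ u v : V, c u v = c v u)
    (hbip : ∀ i : Fin k, ∃ A : Set V, ∀ u v : V, u ≠ v → c u v = i → (u ∈ A ↔ v ∉ A)) :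
    n ≤ 2 ^ k := by
  classical
  choose A hA using hbip
  let f : V → (Fin k → Bool) := fun v i => decide (v ∈ A i)
  have hf : Function.Injective f := by
    intro u v huv
    by_contra hne
    have h := hA (c u v) u v hne rfl
    have := congrFun huv (c u v)
    simp only [f, decide_eq_decide] at this
    tauto
  calc n = Fintype.card V := hn.symm
    _ ≤ Fintype.card (Fin k → Bool) := Fintype.card_le_of_injective f hf
    _ = 2 ^ k := by simp
end

section
/- Let a, b : Fin n → Fin n be distinct bijections of {0,...,n-1} (viewed as integers) such that the integer sums a i + b i are pairwise distinct. Then there exist indices j, k with a j + b j = a k + b k + 1. -/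
theorem stmt2 (n : ℕ) (a b : Fin n → Fin n)
    (ha : Function.Bijective a) (hb : Function.Bijective b) (hab : a ≠ b)
    (hdist : ∀ i j : Fin n, i ≠ j → (a i : ℕ) + (b i : ℕ) ≠ (a j : ℕ) + (b j : ℕ)) :
    ∃ j k : Fin n, (a j : ℕ) + (b j : ℕ) = (a k : ℕ) + (b k : ℕ) + 1 := by
  by_contra hcon
  push_neg at hcon
  set s : Fin n → ℕ := fun i => (a i : ℕ) + (b i : ℕ) with hs
  have hsinj : Function.Injective s := by
    intro i j h
    by_contra hij
    exact hdist i j hij h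
  set t : Fin n → ℕ := fun i => s i / 2 with ht
  have htinj : Function.Injective t := by
    intro i j h
    by_contra hij
    have h1 := hdist i j hij
    have h2 := hcon i j
    have h3 := hcon j i
    simp only [ht, hs] at h h1 h2 h3
    omega
  have htlt : ∀ i, t i < n := by
    intro i
    have h1 := (a i).isLt
    have h2 := (b i).isLt
    simp only [ht, hs]
    omega
  have himg : Finset.image t Finset.univ = Finset.range n := by
    apply Finset.eq_of_subset_of_card_le
    · intro x hx
      simp only [Finset.mem_image] at hx
      obtain ⟨i, _, rfl⟩ := hx
      exact Finset.mem_range.mpr (htlt i)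
    · rw [Finset.card_range, Finset.card_image_of_injective _ htinj, Finset.card_univ,
        Fintype.card_fin]
  have hsum_a : ∑ i, (a i : ℕ) = ∑ i : Fin n, (i : ℕ) := ha.sum_comp _
  have hsum_b : ∑ i, (b i : ℕ) = ∑ i : Fin n, (i : ℕ) := hb.sum_comp _
  have hsum_t : ∑ i, t i = ∑ i : Fin n, (i : ℕ) := by
    have h0 : ∑ i : Fin n, (i : ℕ) = ∑ x ∈ Finset.range n, x :=
      Fin.sum_univ_eq_sum_range (fun x => x) n
    rw [h0, ← himg, Finset.sum_image (fun x _ y _ h => htinj h)]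
  have hsum_s : ∑ i, s i = ∑ i, 2 * t i := by
    simp only [hs]
    rw [Finset.sum_add_distrib, hsum_a, hsum_b, ← Finset.mul_sum, two_mul, hsum_t]
  have heven : ∀ i, s i = 2 * t i := by
    intro i
    have hle : ∀ j ∈ Finset.univ, 2 * t j ≤ s j := by
      intro j _
      simp only [ht]
      omega
    exact ((Finset.sum_eq_sum_iff_of_le hle).mp hsum_s.symm i (Finset.mem_univ i)).symm
  have hsurj : ∀ m, m < n → ∃ i, s i = 2 * m := by
    intro m hm
    have : m ∈ Finset.image t Finset.univ := himg ▸ Finset.mem_range.mpr hm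
    simp only [Finset.mem_image] at this
    obtain ⟨i, _, hi⟩ := this
    exact ⟨i, by rw [heven i, hi]⟩
  have key : ∀ m, ∀ i, s i = 2 * m → (a i : ℕ) = m ∧ (b i : ℕ) = m := by
    intro m
    induction m using Nat.strong_induction_on with
    | _ m IH =>
      intro i hi
      by_contra hcontra
      have hi' : (a i : ℕ) + (b i : ℕ) = 2 * m := hi
      have hcase : (a i : ℕ) < m ∨ (b i : ℕ) < m := by omega
      rcases hcase with hlt | hlt
      · obtain ⟨j, hj⟩ := hsurj (a i : ℕ) (a i).isLt
        obtain ⟨hja, _⟩ := IH _ hlt j hj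
        have hji : j ≠ i := by
          intro e
          rw [e] at hj
          omega
        exact hji (ha.injective (Fin.ext (hja : ((a j : ℕ)) = (a i : ℕ))))
      · obtain ⟨j, hj⟩ := hsurj (b i : ℕ) (b i).isLt
        obtain ⟨_, hjb⟩ := IH _ hlt j hj
        have hji : j ≠ i := by
          intro e
          rw [e] at hj
          omega
        exact hji (hb.injective (Fin.ext (hjb : ((b j : ℕ)) = (b i : ℕ))))
  apply hab
  funext i
  obtain ⟨h1, h2⟩ := key (t i) i (heven i)
  exact Fin.ext (h1.trans h2.symm)
end

section
/- Let n be odd with prime factorization n = p₁^{α₁} ⋯ p_k^{α_k} (distinct odd primes p_i). Then there exists a subset S of the units of ZMod n with |S| = ∏ p_i^{α_i - 1} (p_i - 1) / 2 = φ(n)/2^k such that for all x, y ∈ S (not necessarily distinct), x + y is a unit of ZMod n. -/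
lemma auxpp (p e : ℕ) (hp : p.Prime) (hodd : p ≠ 2) (he : 0 < e) :
    ∃ A : Finset (ZMod (p ^ e)), A.card * 2 = (p ^ e).totient ∧
      (∀ x ∈ A, IsUnit x) ∧ (∀ x ∈ A, ∀ y ∈ A, IsUnit (x + y)) := by
  classical
  have hp2 : 2 < p := lt_of_le_of_ne hp.two_le (Ne.symm hodd)
  set h : ℕ := (p - 1) / 2 with hh
  have h2 : 2 * h = p - 1 := by
    obtain ⟨k, hk⟩ := hp.odd_of_ne_two hodd
    omega
  have hpe : p ^ (e - 1) * p = p ^ e := by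
    rw [← pow_succ]; congr 1; omega
  set f : ℕ × ℕ → ZMod (p ^ e) := fun qr => ((qr.1 * p + qr.2 : ℕ) : ZMod (p ^ e)) with hf
  set T : Finset (ℕ × ℕ) := Finset.range (p ^ (e - 1)) ×ˢ Finset.Icc 1 h with hT
  have hbound : ∀ q r : ℕ, q < p ^ (e-1) → r ≤ h → q * p + r < p ^ e := by
    intro q r hq hr
    calc q * p + r < q * p + p := by omega
    _ = (q + 1) * p := by ring
    _ ≤ p ^ (e - 1) * p := Nat.mul_le_mul_right p (by omega)
    _ = p ^ e := hpe
  have hinj : Set.InjOn f T := by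
    rintro ⟨q1, r1⟩ h1 ⟨q2, r2⟩ h2' heq
    simp only [hT, Finset.coe_product, Set.mem_prod, Finset.coe_range, Set.mem_Iio,
      Finset.coe_Icc, Set.mem_Icc] at h1 h2'
    have hb1 := hbound q1 r1 h1.1 h1.2.2
    have hb2 := hbound q2 r2 h2'.1 h2'.2.2
    have key : q1 * p + r1 = q2 * p + r2 := by
      have := congrArg ZMod.val heq
      simp only [hf] at this
      rwa [ZMod.val_natCast_of_lt hb1, ZMod.val_natCast_of_lt hb2] at this
    have hr : r1 = r2 := by
      have m1 : (q1 * p + r1) % p = r1 := by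
        rw [Nat.add_comm, Nat.add_mul_mod_self_right, Nat.mod_eq_of_lt (by omega)]
      have m2 : (q2 * p + r2) % p = r2 := by
        rw [Nat.add_comm, Nat.add_mul_mod_self_right, Nat.mod_eq_of_lt (by omega)]
      rw [← m1, ← m2, key]
    have hq : q1 = q2 := by
      have : q1 * p = q2 * p := by omega
      exact Nat.eq_of_mul_eq_mul_right hp.pos this
    simp [hq, hr]
  refine ⟨T.image f, ?_, ?_, ?_⟩
  · rw [Finset.card_image_of_injOn hinj]
    have hc : T.card = p ^ (e-1) * h := by simp [hT, Nat.card_Icc]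
    rw [hc, Nat.totient_prime_pow hp he, mul_assoc, mul_comm h 2, h2]
  · intro x hx
    simp only [Finset.mem_image] at hx
    obtain ⟨⟨q, r⟩, hqr, rfl⟩ := hx
    simp only [hT, Finset.mem_product, Finset.mem_range, Finset.mem_Icc] at hqr
    rw [hf, ZMod.isUnit_iff_coprime]
    apply Nat.Coprime.pow_right
    rw [Nat.coprime_comm, hp.coprime_iff_not_dvd]
    intro hdvd
    have hd : p ∣ r := (Nat.dvd_add_right (dvd_mul_left p q)).mp hdvd
    have := Nat.le_of_dvd (by omega) hd
    omega
  · intro x hx y hy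
    simp only [Finset.mem_image] at hx hy
    obtain ⟨⟨q1, r1⟩, hqr1, rfl⟩ := hx
    obtain ⟨⟨q2, r2⟩, hqr2, rfl⟩ := hy
    simp only [hT, Finset.mem_product, Finset.mem_range, Finset.mem_Icc] at hqr1 hqr2
    rw [hf, ← Nat.cast_add, ZMod.isUnit_iff_coprime]
    apply Nat.Coprime.pow_right
    rw [Nat.coprime_comm, hp.coprime_iff_not_dvd]
    intro hdvd
    have hrw : q1 * p + r1 + (q2 * p + r2) = (q1 + q2) * p + (r1 + r2) := by ring
    rw [hrw] at hdvd
    have hd : p ∣ r1 + r2 := (Nat.dvd_add_right (dvd_mul_left p (q1 + q2))).mp hdvd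
    have := Nat.le_of_dvd (by omega) hd
    omega

lemma auxunit {M N : Type*} [Monoid M] [Monoid N] (u : M × N) (h1 : IsUnit u.1)
    (h2 : IsUnit u.2) : IsUnit u := by
  obtain ⟨a, ha⟩ := h1
  obtain ⟨b, hb⟩ := h2
  exact ⟨MulEquiv.prodUnits.symm (a, b), by simp [MulEquiv.prodUnits, ha, hb]⟩

lemma auxmain : ∀ n : ℕ, Odd n →
    ∃ S : Finset (ZMod n), S.card * 2 ^ n.primeFactors.card = n.totient ∧
      (∀ x ∈ S, IsUnit x) ∧ (∀ x ∈ S, ∀ y ∈ S, IsUnit (x + y)) := by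
  classical
  refine Nat.recOnPrimePow ?_ ?_ ?_
  · intro h; exact absurd h (by simp)
  · intro _
    refine ⟨{0}, by simp, ?_, ?_⟩ <;> intros <;> exact isUnit_of_subsingleton _
  · intro a p e hp hpa he ih hodd
    have hane : a ≠ 0 := by rintro rfl; simp at hpa
    have hpne : p ≠ 2 := by
      rintro rfl
      have h2 : 2 ∣ 2 ^ e * a := dvd_mul_of_dvd_left (dvd_pow_self 2 (by omega)) a
      have := Nat.odd_iff.mp hodd
      omega
    have hoa : Odd a := (Nat.odd_mul.mp hodd).2
    obtain ⟨S', hS'c, hS'u, hS's⟩ := ih hoa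
    obtain ⟨A, hAc, hAu, hAs⟩ := auxpp p e hp hpne he
    have hcop : (p ^ e).Coprime a := Nat.Coprime.pow_left _ ((hp.coprime_iff_not_dvd).mpr hpa)
    let φ : ZMod (p ^ e * a) ≃+* ZMod (p ^ e) × ZMod a := ZMod.chineseRemainder hcop
    refine ⟨(A ×ˢ S').image φ.symm, ?_, ?_, ?_⟩
    · rw [Finset.card_image_of_injective _ φ.symm.injective, Finset.card_product]
      have hpf : (p ^ e * a).primeFactors = insert p a.primeFactors := by
        rw [Nat.primeFactors_mul (pow_ne_zero _ hp.pos.ne') hane,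
          Nat.primeFactors_prime_pow (by omega) hp]
        rfl
      have hnotmem : p ∉ a.primeFactors := by
        simp [Nat.mem_primeFactors]; tauto
      rw [hpf, Finset.card_insert_of_notMem hnotmem, Nat.totient_mul hcop,
        ← hAc, ← hS'c, pow_succ]
      ring
    · intro x hx
      simp only [Finset.mem_image, Finset.mem_product] at hx
      obtain ⟨⟨u, v⟩, ⟨hu, hv⟩, rfl⟩ := hx
      exact (auxunit ((u, v) : ZMod (p ^ e) × ZMod a) (hAu u hu) (hS'u v hv)).map φ.symm
    · intro x hx y hy
      simp only [Finset.mem_image, Finset.mem_product] at hx hy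
      obtain ⟨⟨u1, v1⟩, ⟨hu1, hv1⟩, rfl⟩ := hx
      obtain ⟨⟨u2, v2⟩, ⟨hu2, hv2⟩, rfl⟩ := hy
      rw [← map_add]
      refine (auxunit _ ?_ ?_).map φ.symm
      · exact hAs u1 hu1 u2 hu2
      · exact hS's v1 hv1 v2 hv2

theorem stmt3 (n : ℕ) (hn : Odd n) :
    ∃ S : Finset (ZMod n), S.card = n.totient / 2 ^ n.primeFactors.card ∧
      (∀ x ∈ S, IsUnit x) ∧ (∀ x ∈ S, ∀ y ∈ S, IsUnit (x + y)) := by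
  obtain ⟨S, hc, hu, hs⟩ := auxmain n hn
  exact ⟨S, (Nat.div_eq_of_eq_mul_left (by positivity) hc.symm).symm, hu, hs⟩
end

section
/- Let n ≥ 3 be odd and let k be the number of distinct prime divisors of n. Then there exists a family P of permutations of ZMod n with |P| ≥ n·φ(n)/2^k such that for any two distinct σ, τ ∈ P, the pointwise sum i ↦ σ i + τ i is again a permutation of ZMod n. -/
/-!
Let `A ⊆ ZMod n` be the residues whose reduction modulo every prime `p ∣ n` lies in
`{1, …, (p - 1) / 2}`. For `a, a' ∈ A` the reduction of `a + a'` modulo each such `p` lies in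
`{2, …, p - 1}`, so `a + a'` is a unit; hence the pointwise sum of the affine permutations
`x ↦ a x + b` and `x ↦ a' x + b'` is the affine permutation `x ↦ (a + a') x + (b + b')`.
Counting through the Chinese remainder theorem, `|A| = (n / ∏ p) ∏ (p - 1) / 2 = φ(n) / 2 ^ k`,
so the affine maps with slope in `A` give `n φ(n) / 2 ^ k` permutations.
-/

open Finset Function

lemma card_mul_card_filter_comp_eq {G H F : Type*} [AddGroup G] [AddGroup H] [Fintype G]
    [Fintype H] [DecidableEq H] [FunLike F G H] [AddMonoidHomClass F G H] (f : F)
    (hf : Surjective f) (Q : H → Prop) [DecidablePred Q] :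
    Fintype.card H * #{x | Q (f x)} = Fintype.card G * #{y | Q y} := by
  have hfib : ∀ y, #{x | f x = y} = #{x | f x = 0} := fun y =>
    AddMonoidHom.card_fiber_eq_of_mem_range f (hf y) (hf 0)
  have hQ : #{x | Q (f x)} = #{y | Q y} * #{x | f x = 0} := by
    rw [card_eq_sum_card_fiberwise (t := {y | Q y}) (fun x hx => by simpa using hx),
      ← smul_eq_mul, ← sum_const]
    refine sum_congr rfl fun y hy => ?_
    rw [filter_filter, ← hfib y]
    congr 1
    exact filter_congr fun x _ => and_iff_right_of_imp fun h => h ▸ (mem_filter.1 hy).2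
  have hG : Fintype.card G = Fintype.card H * #{x | f x = 0} := by
    rw [← card_univ, card_eq_sum_card_fiberwise (t := univ) (fun x _ => mem_univ (f x)),
      ← card_univ, ← smul_eq_mul, ← sum_const]
    simp only [hfib]
  rw [hQ, hG]
  ring

lemma ZMod.piCastHom_surjective {n : ℕ} {ι : Type*} [Fintype ι] (a : ι → ℕ)
    (hcop : Pairwise (Nat.Coprime on a)) (hdvd : ∏ i, a i ∣ n) :
    Surjective (RingHom.pi fun i => ZMod.castHom ((dvd_prod_of_mem a (mem_univ i)).trans hdvd)
      (ZMod (a i))) := by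
  rw [RingHom.ext_zmod (RingHom.pi _)
    ((ZMod.prodEquivPi a hcop).toRingHom.comp (ZMod.castHom hdvd _))]
  exact (ZMod.prodEquivPi a hcop).surjective.comp (ZMod.ringHom_surjective _)

lemma ZMod.prod_mul_card_filter_forall_cast {n : ℕ} [NeZero n] {ι : Type*} [Fintype ι]
    (a : ι → ℕ) [∀ i, NeZero (a i)] (hcop : Pairwise (Nat.Coprime on a))
    (hdvd : ∏ i, a i ∣ n)
    (Q : ∀ i, ZMod (a i) → Prop) [∀ i, DecidablePred (Q i)] :
    (∏ i, a i) * #{x : ZMod n | ∀ i, Q i (x.cast)} = n * ∏ i, #{y : ZMod (a i) | Q i y} := by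
  classical
  have key := card_mul_card_filter_comp_eq _ (ZMod.piCastHom_surjective a hcop hdvd)
    (fun y => ∀ i, Q i (y i))
  simp only [Fintype.card_pi, ZMod.card, RingHom.pi_apply, ZMod.castHom_apply] at key
  rw [key, ← Fintype.card_piFinset]
  congr 2
  ext y
  simp [Fintype.mem_piFinset]

def IsLowerHalf {p : ℕ} (a : ZMod p) : Prop := 0 < a.val ∧ 2 * a.val < p

instance {p : ℕ} (a : ZMod p) : Decidable (IsLowerHalf a) := instDecidableAnd

lemma IsLowerHalf.ne_zero {p : ℕ} {a : ZMod p} (ha : IsLowerHalf a) : a ≠ 0 := by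
  rintro rfl
  exact ha.1.ne' ZMod.val_zero

lemma IsLowerHalf.add_ne_zero {p : ℕ} {a b : ZMod p} (ha : IsLowerHalf a)
    (hb : IsLowerHalf b) : a + b ≠ 0 := by
  intro h
  unfold IsLowerHalf at ha hb
  have hab := ZMod.val_add_of_lt (show a.val + b.val < p by omega)
  rw [h, ZMod.val_zero] at hab
  omega

lemma two_mul_card_isLowerHalf {p : ℕ} [NeZero p] (hp : Odd p) :
    2 * #{a : ZMod p | IsLowerHalf a} = p - 1 := by
  obtain ⟨q, rfl⟩ := hp
  have : #{a : ZMod (2 * q + 1) | IsLowerHalf a} = #(Ico 1 (q + 1)) := by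
    refine card_nbij' ZMod.val Nat.cast (fun a ha => ?_) (fun r hr => ?_) (fun a _ => ?_)
      (fun r hr => ?_)
    · have ha := (mem_filter.1 ha).2
      simp only [coe_Ico, Set.mem_Ico]
      unfold IsLowerHalf at ha
      omega
    · simp only [coe_Ico, Set.mem_Ico] at hr
      refine mem_filter.2 ⟨mem_univ _, ?_⟩
      unfold IsLowerHalf
      rw [ZMod.val_cast_of_lt (by omega)]
      omega
    · exact ZMod.natCast_zmod_val a
    · simp only [coe_Ico, Set.mem_Ico] at hr
      exact ZMod.val_cast_of_lt (by omega)
  rw [this, Nat.card_Ico]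
  omega

lemma ZMod.isUnit_of_forall_cast_ne_zero {n : ℕ} [NeZero n] {x : ZMod n}
    (hx : ∀ p ∈ n.primeFactors, (x.cast : ZMod p) ≠ 0) : IsUnit x := by
  rw [← ZMod.natCast_zmod_val x, ZMod.isUnit_iff_coprime]
  refine Nat.coprime_of_dvd fun p hp hpx hpn =>
    hx p (Nat.mem_primeFactors.2 ⟨hp, hpn, NeZero.ne n⟩) ?_
  rwa [ZMod.cast_eq_val, ZMod.natCast_eq_zero_iff]

def lowerHalfSet (n : ℕ) [NeZero n] : Finset (ZMod n) :=
  {x | ∀ p ∈ n.primeFactors, IsLowerHalf (x.cast : ZMod p)}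

section lowerHalfSet

variable {n : ℕ} [NeZero n] {x y : ZMod n}

lemma isUnit_of_mem_lowerHalfSet (hx : x ∈ lowerHalfSet n) : IsUnit x :=
  ZMod.isUnit_of_forall_cast_ne_zero fun p hp => ((mem_filter.1 hx).2 p hp).ne_zero

lemma isUnit_add_of_mem_lowerHalfSet (hx : x ∈ lowerHalfSet n) (hy : y ∈ lowerHalfSet n) :
    IsUnit (x + y) := by
  refine ZMod.isUnit_of_forall_cast_ne_zero fun p hp => ?_
  rw [ZMod.cast_add (Nat.dvd_of_mem_primeFactors hp)]
  exact ((mem_filter.1 hx).2 p hp).add_ne_zero ((mem_filter.1 hy).2 p hp)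

lemma two_pow_card_primeFactors_mul_card_lowerHalfSet (hn : Odd n) :
    2 ^ #n.primeFactors * #(lowerHalfSet n) = n.totient := by
  have : ∀ p : n.primeFactors, NeZero (p : ℕ) := fun p =>
    ⟨(Nat.pos_of_mem_primeFactors p.2).ne'⟩
  have hcop : Pairwise (Nat.Coprime on fun p : n.primeFactors => (p : ℕ)) := fun p q hpq =>
    (Nat.coprime_primes (Nat.prime_of_mem_primeFactors p.2)
      (Nat.prime_of_mem_primeFactors q.2)).2 (Subtype.coe_ne_coe.2 hpq)
  have hdvd : ∏ p : n.primeFactors, (p : ℕ) ∣ n := by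
    convert Nat.prod_primeFactors_dvd n using 1
    exact prod_coe_sort n.primeFactors id
  have hcount := ZMod.prod_mul_card_filter_forall_cast _ hcop hdvd fun _ a => IsLowerHalf a
  have hhalf : ∀ p : n.primeFactors, 2 * #{a : ZMod p | IsLowerHalf a} = (p : ℕ) - 1 :=
    fun p => two_mul_card_isLowerHalf (hn.of_dvd_nat (Nat.dvd_of_mem_primeFactors p.2))
  have htot := Nat.totient_mul_prod_primeFactors n
  simp only [← prod_coe_sort n.primeFactors] at htot
  have hset : #{x : ZMod n | ∀ p : n.primeFactors, IsLowerHalf (x.cast : ZMod p)} =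
      #(lowerHalfSet n) := by
    simp only [lowerHalfSet, Subtype.forall]
  have hrad : 0 < ∏ p : n.primeFactors, (p : ℕ) :=
    prod_pos fun p _ => Nat.pos_of_mem_primeFactors p.2
  refine Nat.eq_of_mul_eq_mul_right hrad ?_
  calc 2 ^ #n.primeFactors * #(lowerHalfSet n) * ∏ p : n.primeFactors, (p : ℕ)
      = n * ∏ p : n.primeFactors, 2 * #{a : ZMod p | IsLowerHalf a} := by
        rw [prod_mul_distrib, prod_const, card_univ, Fintype.card_coe, mul_left_comm, ← hcount,
          hset]
        ring
    _ = n * ∏ p : n.primeFactors, ((p : ℕ) - 1) := by simp only [hhalf]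
    _ = n.totient * ∏ p : n.primeFactors, (p : ℕ) := htot.symm

end lowerHalfSet

section Affine

variable {R : Type*} [Ring R]

def affinePerm (u : Rˣ) (b : R) : Equiv.Perm R :=
  (Units.mulLeft u).trans (Equiv.addRight b)

@[simp]
lemma affinePerm_apply (u : Rˣ) (b x : R) : affinePerm u b x = u * x + b := rfl

lemma affinePerm_injective : Injective fun ub : Rˣ × R => affinePerm ub.1 ub.2 := by
  rintro ⟨u, b⟩ ⟨v, c⟩ h
  have h0 := congr($h 0)
  have h1 := congr($h 1)
  simp only [affinePerm_apply, mul_zero, zero_add, mul_one] at h0 h1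
  subst h0
  simp [Units.ext (add_right_cancel h1)]

lemma bijective_affinePerm_add_affinePerm {u v : Rˣ} (huv : IsUnit (u + v : R)) (b c : R) :
    Bijective fun x => affinePerm u b x + affinePerm v c x := by
  convert (affinePerm huv.unit (b + c)).bijective using 1
  ext x
  simp only [affinePerm_apply, IsUnit.unit_spec]
  noncomm_ring

end Affine

theorem stmt4_general (n : ℕ) (hn : Odd n) :
    ∃ P : Finset (Equiv.Perm (ZMod n)),
      n * n.totient / 2 ^ n.primeFactors.card ≤ P.card ∧
      ∀ σ ∈ P, ∀ τ ∈ P, σ ≠ τ → Function.Bijective (fun i => σ i + τ i) := by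
  classical
  have : NeZero n := ⟨hn.pos.ne'⟩
  let U := (lowerHalfSet n).preimage ((↑) : (ZMod n)ˣ → ZMod n) Units.val_injective.injOn
  have hU : #U = #(lowerHalfSet n) := by
    rw [card_preimage,
      filter_true_of_mem fun x hx => ⟨(isUnit_of_mem_lowerHalfSet hx).unit, rfl⟩]
  refine ⟨(U ×ˢ univ).image fun ub => affinePerm ub.1 ub.2, le_of_eq ?_, ?_⟩
  · rw [card_image_of_injective _ affinePerm_injective, card_product, card_univ, ZMod.card, hU,
      ← two_pow_card_primeFactors_mul_card_lowerHalfSet hn, mul_left_comm,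
      Nat.mul_div_cancel_left _ (by positivity), mul_comm]
  · intro σ hσ τ hτ _
    obtain ⟨⟨u, b⟩, hub, rfl⟩ := mem_image.1 hσ
    obtain ⟨⟨v, c⟩, hvc, rfl⟩ := mem_image.1 hτ
    exact bijective_affinePerm_add_affinePerm (isUnit_add_of_mem_lowerHalfSet
      (mem_preimage.1 (mem_product.1 hub).1) (mem_preimage.1 (mem_product.1 hvc).1)) b c

theorem stmt4 (n : ℕ) (hn : Odd n) (h3 : 3 ≤ n) :
    ∃ P : Finset (Equiv.Perm (ZMod n)),
      n * n.totient / 2 ^ n.primeFactors.card ≤ P.card ∧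
      ∀ σ ∈ P, ∀ τ ∈ P, σ ≠ τ → Function.Bijective (fun i => σ i + τ i) :=
  stmt4_general n hn
end

section
/- Let n be an odd prime and let P be a set of permutations of ZMod n such that the sum of any two distinct elements of P is a permutation. Then |P| ≤ (e²/π) · n · ((n-1)/e)^{(n-1)/2}. -/
/-!
Viewed as vectors in `𝔽ₚ^p`, the permutations in `P` are pairwise orthogonal for the standard dot
product: `∑ x² = 0` over `𝔽ₚ` when `p > 3`, and expanding `‖σ + τ‖² = 0` gives `σ ⬝ τ = 0`. Hence
they span a totally isotropic subspace, of dimension `r ≤ (p - 1) / 2`, and so are determined by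
their values on some `r` coordinates `x₀, …, x_{r-1}`. Among the permutations agreeing on
`x₀, …, x_{k-1}` (`k ≥ 1`), the set `A` of values at `x_k` satisfies `A + A ⊆ 𝔽ₚ ∖ {2σ(xᵢ)}`, so
Cauchy–Davenport gives `|A| ≤ (p - k + 1) / 2`. Multiplying these bounds and estimating the
product with the central binomial coefficient and Stirling's bound `m! ≤ e √m (m / e)^m` gives the
claim.
-/

open Finset Module Pointwise Real
open scoped Nat

section LinearAlgebra

variable {K ι : Type*} [Field K] [Fintype ι]

theorem Submodule.exists_card_le_finrank_forall_eq_zero (W : Submodule K (ι → K)) :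
    ∃ s : Finset ι, #s ≤ finrank K W ∧ ∀ v ∈ W, (∀ i ∈ s, v i = 0) → v = 0 := by
  classical
  let coord : ι → Dual K W := fun i => (LinearMap.proj i).comp W.subtype
  obtain ⟨s, hli, hmax⟩ := exists_maximal_linearIndepOn K coord
  refine ⟨s.toFinset, ?_, fun v hv hs => funext fun i => ?_⟩
  · rw [← Subspace.dual_finrank_eq, Set.toFinset_card]
    exact hli.fintype_card_le_finrank
  · by_cases hi : i ∈ s
    · exact hs i (Set.mem_toFinset.2 hi)
    obtain ⟨a, ha, hspan⟩ := hmax i hi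
    have hvanish : span K (coord '' s) ≤ LinearMap.ker (Dual.eval K W ⟨v, hv⟩) :=
      Submodule.span_le.2 <| by
        rintro _ ⟨j, hj, rfl⟩
        exact hs j (Set.mem_toFinset.2 hj)
    have : a * v i = 0 := hvanish hspan
    exact (mul_eq_zero.1 this).resolve_left ha

/-- The dot product embeds a totally isotropic subspace into its own annihilator. -/
theorem two_mul_finrank_span_le_card (S : Set (ι → K)) (hS : ∀ v ∈ S, ∀ w ∈ S, v ⬝ᵥ w = 0) :
    2 * finrank K (Submodule.span K S) ≤ Fintype.card ι := by
  classical
  set W := Submodule.span K S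
  have hmap : W.map (dotProductEquiv K ι).toLinearMap ≤ W.dualAnnihilator := by
    rw [Submodule.map_span, Submodule.span_le]
    rintro _ ⟨v, hv, rfl⟩
    rw [SetLike.mem_coe, Submodule.mem_dualAnnihilator]
    intro w hw
    exact (Submodule.span_le (p := LinearMap.ker (dotProductEquiv K ι v))).2 (hS v hv) hw
  have hle := Submodule.finrank_mono hmap
  rw [LinearEquiv.finrank_map_eq] at hle
  have hsum := Subspace.finrank_add_finrank_dualAnnihilator_eq W
  rw [finrank_fintype_fun_eq_card] at hsum
  omega

end LinearAlgebra

section Permutations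

variable {K : Type*} [Field K]

theorem bijective_add_of_forall_ne (h2 : (2 : K) ≠ 0) {P : Finset (Equiv.Perm K)}
    (h : ∀ σ ∈ P, ∀ τ ∈ P, σ ≠ τ → Function.Bijective (fun i => σ i + τ i)) :
    ∀ σ ∈ P, ∀ τ ∈ P, Function.Bijective (⇑σ + ⇑τ) := by
  intro σ hσ τ hτ
  obtain rfl | hne := eq_or_ne σ τ
  · have hσσ : ⇑σ + ⇑σ = (2 * ·) ∘ σ := funext fun i => (two_mul (σ i)).symm
    rw [hσσ]
    exact (mulLeft_bijective₀ 2 h2).comp σ.bijective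
  · exact h σ hσ τ hτ hne

variable [Fintype K]

theorem dotProduct_self_eq_zero_of_bijective (hK : 3 < Fintype.card K) {f : K → K}
    (hf : Function.Bijective f) : f ⬝ᵥ f = 0 := by
  simp_rw [dotProduct, ← sq]
  rw [hf.sum_comp (· ^ 2)]
  exact FiniteField.sum_pow_lt_card_sub_one (K := K) 2 (by omega)

theorem dotProduct_eq_zero_of_bijective_add (hK : 3 < Fintype.card K) (h2 : (2 : K) ≠ 0)
    {f g : K → K} (hf : Function.Bijective f) (hg : Function.Bijective g)
    (hfg : Function.Bijective (f + g)) : f ⬝ᵥ g = 0 := by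
  have h := dotProduct_self_eq_zero_of_bijective hK hfg
  rw [add_dotProduct, dotProduct_add, dotProduct_add, dotProduct_self_eq_zero_of_bijective hK hf,
    dotProduct_self_eq_zero_of_bijective hK hg, dotProduct_comm g f, zero_add, add_zero,
    ← two_mul] at h
  exact (mul_eq_zero.1 h).resolve_left h2

theorem exists_determining_finset_of_bijective_add (hK : 3 < Fintype.card K) (h2 : (2 : K) ≠ 0)
    (P : Finset (Equiv.Perm K)) (hP : ∀ σ ∈ P, ∀ τ ∈ P, Function.Bijective (⇑σ + ⇑τ)) :
    ∃ s : Finset K, 2 * #s ≤ Fintype.card K ∧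
      ∀ σ ∈ P, ∀ τ ∈ P, (∀ i ∈ s, σ i = τ i) → σ = τ := by
  set W := Submodule.span K ((⇑) '' (P : Set (Equiv.Perm K)) : Set (K → K))
  have hW : 2 * finrank K W ≤ Fintype.card K := by
    refine two_mul_finrank_span_le_card _ ?_
    rintro _ ⟨σ, hσ, rfl⟩ _ ⟨τ, hτ, rfl⟩
    exact dotProduct_eq_zero_of_bijective_add hK h2 σ.bijective τ.bijective (hP σ hσ τ hτ)
  obtain ⟨s, hs, hzero⟩ := W.exists_card_le_finrank_forall_eq_zero
  refine ⟨s, by omega, fun σ hσ τ hτ hστ => Equiv.ext fun i => ?_⟩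
  have hmem : ⇑σ - ⇑τ ∈ W :=
    sub_mem (Submodule.subset_span ⟨σ, hσ, rfl⟩) (Submodule.subset_span ⟨τ, hτ, rfl⟩)
  exact sub_eq_zero.1 (congrFun (hzero _ hmem fun i hi => sub_eq_zero.2 (hστ i hi)) i)

end Permutations

theorem card_le_prod_of_branching_le {β : Type*} [DecidableEq β] (c : ℕ → ℕ) :
    ∀ {r : ℕ} (S : Finset (Fin r → β)),
      (∀ k : Fin r, ∀ x ∈ S, #({y ∈ S | ∀ i < k, y i = x i}.image (· k)) ≤ c k) →
      #S ≤ ∏ k ∈ range r, c k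
  | 0, S, _ => by simpa using Finset.card_le_one_of_subsingleton S
  | r + 1, S, hS => by
    classical
    have hinit : ∀ k : Fin r, ∀ x ∈ S.image Fin.init,
        #({y ∈ S.image Fin.init | ∀ i < k, y i = x i}.image (· k)) ≤ c k := by
      intro k x' hx'
      obtain ⟨x, hx, rfl⟩ := mem_image.1 hx'
      refine le_trans (card_le_card ?_) (hS k.castSucc x hx)
      simp only [subset_iff, mem_image, mem_filter]
      rintro _ ⟨_, ⟨⟨y, hy, rfl⟩, hyx⟩, rfl⟩
      refine ⟨y, ⟨hy, fun i hi => ?_⟩, rfl⟩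
      simpa [Fin.init] using hyx (i.castPred (Fin.ne_last_of_lt hi)) hi
    have hfiber : ∀ x' ∈ S.image Fin.init, #{y ∈ S | Fin.init y = x'} ≤ c r := by
      intro x' hx'
      obtain ⟨x, hx, rfl⟩ := mem_image.1 hx'
      refine le_trans (card_le_card_of_injOn (· (Fin.last r)) ?_ ?_) (hS (Fin.last r) x hx)
      · intro y hy
        rw [mem_coe, mem_filter] at hy
        refine mem_image_of_mem _ (mem_filter.2 ⟨hy.1, fun i hi => ?_⟩)
        simpa [Fin.init, Fin.castSucc_castPred] using congrFun hy.2 (i.castPred hi.ne)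
      · intro y hy z hz hyz
        rw [mem_coe, mem_filter] at hy hz
        rw [← Fin.snoc_init_self y, ← Fin.snoc_init_self z, hy.2, hz.2]
        exact congrArg _ hyz
    calc #S ≤ c r * #(S.image Fin.init) := card_le_mul_card_image S _ hfiber
      _ ≤ c r * ∏ k ∈ range r, c k :=
        Nat.mul_le_mul_left _ (card_le_prod_of_branching_le c _ hinit)
      _ = ∏ k ∈ range (r + 1), c k := by rw [prod_range_succ, mul_comm]

/-- The number of values the `k`-th determining coordinate can take on the permutations that
agree on the first `k` of them; for `k = 0` there is no constraint. -/
def branchBound (n k : ℕ) : ℕ := if k = 0 then n else (n - k + 1) / 2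

section Counting

variable {p : ℕ} [Fact p.Prime]

/-- For `x ∈ X`, `σ y + τ y = 2 σ₀ x = σ x + τ x` would contradict the injectivity of `σ + τ`, so
the sumset of the values at `y` misses the `#X` values `2 σ₀ x`; Cauchy–Davenport then bounds the
number of these values. -/
theorem card_image_apply_le_of_eqOn (Q : Finset (Equiv.Perm (ZMod p)))
    (hQ : ∀ σ ∈ Q, ∀ τ ∈ Q, Function.Injective (⇑σ + ⇑τ)) {X : Finset (ZMod p)}
    (hX : X.Nonempty) {y : ZMod p} (hy : y ∉ X) (hagree : ∀ σ ∈ Q, ∀ τ ∈ Q, ∀ x ∈ X, σ x = τ x) :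
    #(Q.image (· y)) ≤ (p - #X + 1) / 2 := by
  classical
  obtain rfl | ⟨σ₀, hσ₀⟩ := Q.eq_empty_or_nonempty
  · simp
  set A := Q.image (· y)
  have hsub : A + A ⊆ univ \ X.image (⇑σ₀ + ⇑σ₀) := by
    simp only [subset_iff, mem_add, mem_sdiff, mem_univ, mem_image, true_and, A]
    rintro _ ⟨_, ⟨σ, hσ, rfl⟩, _, ⟨τ, hτ, rfl⟩, rfl⟩ ⟨x, hx, hxy⟩
    have hxy' : (⇑σ + ⇑τ) x = (⇑σ + ⇑τ) y := by
      simp only [Pi.add_apply] at hxy ⊢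
      rw [← hxy, ← hagree σ₀ hσ₀ σ hσ x hx, ← hagree σ₀ hσ₀ τ hτ x hx]
    exact hy (hQ σ hσ τ hτ hxy' ▸ hx)
  have hAA : #(A + A) ≤ p - #X := by
    have := card_le_card hsub
    rwa [card_sdiff_of_subset (subset_univ _), card_univ, ZMod.card,
      card_image_of_injective _ (hQ σ₀ hσ₀ σ₀ hσ₀)] at this
  have hA : A.Nonempty := image_nonempty.2 ⟨σ₀, hσ₀⟩
  have hCD := ZMod.cauchy_davenport Fact.out hA hA
  have hXp : #X ≤ p := by simpa using card_le_univ X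
  have := hX.card_pos
  omega

theorem card_le_prod_branchBound (P : Finset (Equiv.Perm (ZMod p)))
    (hP : ∀ σ ∈ P, ∀ τ ∈ P, Function.Injective (⇑σ + ⇑τ)) (s : Finset (ZMod p))
    (hs : ∀ σ ∈ P, ∀ τ ∈ P, (∀ i ∈ s, σ i = τ i) → σ = τ) :
    #P ≤ ∏ k ∈ range #s, branchBound p k := by
  classical
  set e : Fin #s → ZMod p := fun t => s.equivFin.symm t
  have he : Function.Injective e := Subtype.val_injective.comp s.equivFin.symm.injective
  have hrestrict : Set.InjOn (fun (σ : Equiv.Perm (ZMod p)) t => σ (e t)) P := by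
    refine fun σ hσ τ hτ hστ => hs σ hσ τ hτ fun i hi => ?_
    simpa [e] using congrFun hστ (s.equivFin ⟨i, hi⟩)
  rw [← card_image_of_injOn hrestrict]
  refine card_le_prod_of_branching_le _ _ fun k x hx => ?_
  obtain ⟨σ₀, hσ₀, rfl⟩ := mem_image.1 hx
  set Q := {σ ∈ P | ∀ i < k, σ (e i) = σ₀ (e i)}
  have hsub : {y ∈ P.image (fun σ t => σ (e t)) | ∀ i < k, y i = σ₀ (e i)}.image (· k) ⊆
      Q.image (· (e k)) := by
    simp only [subset_iff, mem_image, mem_filter, Q]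
    rintro _ ⟨_, ⟨⟨σ, hσ, rfl⟩, hσσ₀⟩, rfl⟩
    exact ⟨σ, ⟨hσ, hσσ₀⟩, rfl⟩
  refine (card_le_card hsub).trans ?_
  unfold branchBound
  split_ifs with hk
  · simpa using card_le_univ (Q.image (· (e k)))
  have hX : #((Iio k).image e) = k := by rw [card_image_of_injective _ he, Fin.card_Iio]
  rw [← hX]
  refine card_image_apply_le_of_eqOn Q
    (fun σ hσ τ hτ => hP σ (mem_filter.1 hσ).1 τ (mem_filter.1 hτ).1) ?_ ?_ ?_
  · exact ⟨_, mem_image_of_mem e (mem_Iio.2 (show ⟨0, k.pos⟩ < k from Nat.pos_of_ne_zero hk))⟩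
  · simp [he.eq_iff]
  · simp only [mem_image, mem_Iio, Q, mem_filter]
    rintro σ ⟨-, hσ⟩ τ ⟨-, hτ⟩ _ ⟨i, hi, rfl⟩
    rw [hσ i hi, hτ i hi]

end Counting

theorem prod_range_branchBound_le_of_le {r m n : ℕ} (hrm : r ≤ m) (hmn : m ≤ n) :
    ∏ k ∈ range r, branchBound n k ≤ ∏ k ∈ range m, branchBound n k :=
  prod_le_prod_of_subset_of_one_le' (range_subset_range.2 hrm) fun k hk _ => by
    have := mem_range.1 hk
    unfold branchBound
    split_ifs <;> omega

theorem factorial_le_exp_one_mul_sqrt_mul_pow {m : ℕ} (hm : m ≠ 0) :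
    (m ! : ℝ) ≤ exp 1 * √m * (m / exp 1) ^ m := by
  obtain ⟨l, rfl⟩ := Nat.exists_eq_add_one_of_ne_zero hm
  have h : Stirling.stirlingSeq (l + 1) ≤ Stirling.stirlingSeq 1 :=
    Stirling.stirlingSeq'_antitone (Nat.zero_le l)
  rw [Stirling.stirlingSeq_one, Stirling.stirlingSeq, div_le_iff₀ (by positivity),
    Real.sqrt_mul zero_le_two] at h
  refine h.trans_eq ?_
  field_simp

/-- `x + 2 ≥ 2 √(2x)` and `2 √2 e > 2π`. -/
theorem two_mul_pi_mul_sqrt_le {x : ℝ} (hx : 0 ≤ x) : 2 * π * √x ≤ exp 1 * (x + 2) := by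
  have hsq : √x ^ 2 = x := Real.sq_sqrt hx
  nlinarith [Real.sqrt_nonneg x, sq_nonneg (√x * 6 - 7), Real.pi_pos, Real.pi_lt_d2,
    Real.exp_one_gt_d9]

theorem two_pow_mul_prod_div_two_le_descFactorial (n l : ℕ) :
    2 ^ l * ∏ j ∈ range l, (n - j) / 2 ≤ n.descFactorial l := by
  rw [Nat.descFactorial_eq_prod_range]
  nth_rw 1 [← card_range l]
  rw [pow_card_mul_prod]
  exact prod_le_prod' fun j _ => Nat.mul_div_le (n - j) 2

theorem add_three_mul_descFactorial (l : ℕ) :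
    (l + 3) * (2 * l + 3).descFactorial l = (2 * l + 3).choose (l + 1) * (l + 1)! := by
  refine Nat.eq_of_mul_eq_mul_right (Nat.factorial_pos (l + 2)) ?_
  have h1 := Nat.factorial_mul_descFactorial (show l ≤ 2 * l + 3 by omega)
  have h2 := Nat.choose_mul_factorial_mul_factorial (show l + 1 ≤ 2 * l + 3 by omega)
  rw [show 2 * l + 3 - l = l + 3 by omega, Nat.factorial_succ (l + 2)] at h1
  rw [show 2 * l + 3 - (l + 1) = l + 2 by omega] at h2
  linarith

theorem prod_range_branchBound_mul_le (l : ℕ) :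
    2 ^ l * (l + 3) * ∏ k ∈ range (l + 1), branchBound (2 * l + 3) k ≤
      (2 * l + 3) * 4 ^ (l + 1) * (l + 1)! := by
  have hsucc : ∀ j ∈ range l, branchBound (2 * l + 3) (j + 1) = (2 * l + 3 - j) / 2 := by
    intro j hj
    simp only [branchBound, Nat.add_one_ne_zero, if_false]
    have := mem_range.1 hj
    congr 1
    omega
  rw [prod_range_succ', prod_congr rfl hsucc, branchBound, if_pos rfl]
  calc 2 ^ l * (l + 3) * ((∏ j ∈ range l, (2 * l + 3 - j) / 2) * (2 * l + 3))
      = (2 * l + 3) * ((l + 3) * (2 ^ l * ∏ j ∈ range l, (2 * l + 3 - j) / 2)) := by ring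
    _ ≤ (2 * l + 3) * ((l + 3) * (2 * l + 3).descFactorial l) := by
      gcongr
      exact two_pow_mul_prod_div_two_le_descFactorial _ _
    _ = (2 * l + 3) * ((2 * l + 3).choose (l + 1) * (l + 1)!) := by
      rw [add_three_mul_descFactorial]
    _ ≤ (2 * l + 3) * (4 ^ (l + 1) * (l + 1)!) := by
      gcongr
      exact Nat.choose_middle_le_pow (l + 1)
    _ = (2 * l + 3) * 4 ^ (l + 1) * (l + 1)! := by ring

theorem prod_range_branchBound_le {n : ℕ} (hn : Odd n) (h3 : 3 ≤ n) :
    ((∏ k ∈ range ((n - 1) / 2), branchBound n k : ℕ) : ℝ) ≤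
      exp 1 ^ 2 / π * n * ((n - 1) / exp 1) ^ ((n - 1) / 2) := by
  obtain ⟨l, rfl⟩ : ∃ l, n = 2 * l + 3 := by obtain ⟨m, rfl⟩ := hn; exact ⟨m - 1, by omega⟩
  rw [show (2 * l + 3 - 1) / 2 = l + 1 by omega]
  set M : ℝ := ((l + 1 : ℕ) : ℝ)
  have hcast : ((2 * l + 3 : ℕ) : ℝ) - 1 = 2 * M := by push_cast [M]; ring
  rw [hcast]
  have hnat : (2 : ℝ) ^ l * (M + 2) * ((∏ k ∈ range (l + 1), branchBound (2 * l + 3) k : ℕ) : ℝ) ≤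
      (2 * l + 3 : ℕ) * 4 ^ (l + 1) * ((l + 1)! : ℝ) := by
    have hM : M + 2 = ((l + 3 : ℕ) : ℝ) := by push_cast [M]; ring
    rw [hM]
    exact_mod_cast prod_range_branchBound_mul_le l
  have hconst : 2 * exp 1 * √M ≤ exp 1 ^ 2 / π * (M + 2) := by
    rw [div_mul_eq_mul_div, le_div_iff₀ pi_pos]
    nlinarith [two_mul_pi_mul_sqrt_le (Nat.cast_nonneg (l + 1) : (0 : ℝ) ≤ M), exp_pos 1]
  have hpos : (0 : ℝ) < 2 ^ l * (M + 2) := by positivity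
  refine le_of_mul_le_mul_left ?_ hpos
  calc 2 ^ l * (M + 2) * ((∏ k ∈ range (l + 1), branchBound (2 * l + 3) k : ℕ) : ℝ)
      ≤ (2 * l + 3 : ℕ) * 4 ^ (l + 1) * ((l + 1)! : ℝ) := hnat
    _ ≤ (2 * l + 3 : ℕ) * 4 ^ (l + 1) * (exp 1 * √M * (M / exp 1) ^ (l + 1)) := by
      gcongr
      exact factorial_le_exp_one_mul_sqrt_mul_pow (Nat.succ_ne_zero l)
    _ = ((2 * l + 3 : ℕ) * 2 ^ l * (2 * M / exp 1) ^ (l + 1)) * (2 * exp 1 * √M) := by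
      rw [mul_div_assoc, mul_pow, show (4 : ℝ) = 2 ^ 2 by norm_num, ← pow_mul]
      ring
    _ ≤ ((2 * l + 3 : ℕ) * 2 ^ l * (2 * M / exp 1) ^ (l + 1)) * (exp 1 ^ 2 / π * (M + 2)) := by
      gcongr
    _ = 2 ^ l * (M + 2) * (exp 1 ^ 2 / π * (2 * l + 3 : ℕ) * (2 * M / exp 1) ^ (l + 1)) := by
      ring

theorem stmt11 (n : ℕ) (hp : n.Prime) (hodd : Odd n) (P : Finset (Equiv.Perm (ZMod n)))
    (h : ∀ σ ∈ P, ∀ τ ∈ P, σ ≠ τ → Function.Bijective (fun i => σ i + τ i)) :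
    (P.card : ℝ) ≤ (Real.exp 1) ^ 2 / Real.pi * n *
      (((n : ℝ) - 1) / Real.exp 1) ^ ((n - 1) / 2) := by
  classical
  have := Fact.mk hp
  have hn_odd : n % 2 = 1 := Nat.odd_iff.1 hodd
  have hn3 : 3 ≤ n := by have := hp.two_le; omega
  have h2 : (2 : ZMod n) ≠ 0 := Ring.two_ne_zero (by rw [ZMod.ringChar_zmod_n]; omega)
  have hP := bijective_add_of_forall_ne h2 h
  have hcount : #P ≤ ∏ k ∈ range ((n - 1) / 2), branchBound n k := by
    -- For `n = 3`, `∑ x² ≠ 0` in `ZMod 3`, but all three coordinates already give the bound.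
    obtain rfl | hn5 : n = 3 ∨ 5 ≤ n := by omega
    · calc #P ≤ ∏ k ∈ range #(univ : Finset (ZMod 3)), branchBound 3 k :=
            card_le_prod_branchBound P (fun σ hσ τ hτ => (hP σ hσ τ hτ).injective) univ
              fun σ _ τ _ hστ => Equiv.ext fun i => hστ i (mem_univ i)
        _ = ∏ k ∈ range ((3 - 1) / 2), branchBound 3 k := by
            simp [ZMod.card, prod_range_succ, branchBound]
    · obtain ⟨s, hs, hdet⟩ := exists_determining_finset_of_bijective_add
        (by rw [ZMod.card]; omega) h2 P hP
      rw [ZMod.card] at hs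
      calc #P ≤ ∏ k ∈ range #s, branchBound n k :=
            card_le_prod_branchBound P (fun σ hσ τ hτ => (hP σ hσ τ hτ).injective) s hdet
        _ ≤ _ := prod_range_branchBound_le_of_le (by omega) (by omega)
  exact (Nat.cast_le.2 hcount).trans (prod_range_branchBound_le hodd hn3)
end

section
/- Let n be odd. Then there exists a family P of permutations of ZMod n with |P| = 2^{(n-1)/2} · ((n-1)/2)! such that for any two distinct σ, τ ∈ P, the pointwise sum i ↦ σ i + τ i is NOT a permutation of ZMod n. -/
set_option linter.unnecessarySeqFocus false

namespace Stmt12Aux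

abbrev A (m : ℕ) := (Fin m × Bool) ⊕ Unit

def enc (m : ℕ) : A m → ℕ
  | .inl (i, b) => 2 * i + (cond b 1 0)
  | .inr _ => 2 * m

lemma enc_lt (m : ℕ) (a : A m) : enc m a < 2 * m + 1 := by
  rcases a with ⟨i, b⟩ | u
  · have := i.2; cases b <;> simp [enc] <;> omega
  · simp [enc]

lemma enc_inj (m : ℕ) : Function.Injective (enc m) := by
  rintro (⟨i, b⟩ | ⟨⟩) (⟨j, b'⟩ | ⟨⟩) h <;>
    simp only [enc] at h
  · have hi := i.2; have hj := j.2
    have : (i : ℕ) = j ∧ b = b' := by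
      cases b <;> cases b' <;> simp at h ⊢ <;> omega
    obtain ⟨h1, h2⟩ := this
    simp [Prod.ext_iff, Fin.ext_iff, h1, h2]
  · have := i.2; cases b <;> simp at h <;> omega
  · have := j.2; cases b' <;> simp at h <;> omega
  · rfl

noncomputable def E (m : ℕ) : A m ≃ ZMod (2 * m + 1) :=
  Equiv.ofBijective (fun a => ((enc m a : ℕ) : ZMod (2 * m + 1)))
    (by
      rw [Fintype.bijective_iff_injective_and_card]
      constructor
      · intro a a' h
        apply enc_inj m
        have h1 := ZMod.val_cast_of_lt (enc_lt m a)
        have h2 := ZMod.val_cast_of_lt (enc_lt m a')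
        simp only at h
        rw [← h1, h, h2]
      · simp [ZMod.card]; ring)

lemma E_apply (m : ℕ) (a : A m) : E m a = ((enc m a : ℕ) : ZMod (2 * m + 1)) := rfl

def blk (m : ℕ) (σ : Equiv.Perm (Fin m)) (c : Fin m → Bool) : Equiv.Perm (A m) :=
  Equiv.sumCongr
    { toFun := fun p => (σ p.1, xor p.2 (c p.1))
      invFun := fun p => (σ.symm p.1, xor p.2 (c (σ.symm p.1)))
      left_inv := by
        rintro ⟨i, b⟩
        simp [Bool.xor_assoc]
      right_inv := by
        rintro ⟨i, b⟩
        simp [Bool.xor_assoc] }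
    (Equiv.refl Unit)

noncomputable def pm (m : ℕ) (σ : Equiv.Perm (Fin m)) (c : Fin m → Bool) :
    Equiv.Perm (ZMod (2 * m + 1)) :=
  (E m).permCongr (blk m σ c)

lemma pm_apply (m : ℕ) (σ : Equiv.Perm (Fin m)) (c : Fin m → Bool) (a : A m) :
    pm m σ c (E m a) = E m (blk m σ c a) := by
  simp [pm]

lemma blk_inl (m : ℕ) (σ : Equiv.Perm (Fin m)) (c : Fin m → Bool) (i : Fin m) (b : Bool) :
    blk m σ c (.inl (i, b)) = .inl (σ i, xor b (c i)) := rfl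

lemma blk_inr (m : ℕ) (σ : Equiv.Perm (Fin m)) (c : Fin m → Bool) (u : Unit) :
    blk m σ c (.inr u) = .inr u := rfl

lemma Qlem (m : ℕ) :
    ∑ k ∈ Finset.range (2 * m + 1), (k : ℤ) ^ 2 =
      8 * ∑ k ∈ Finset.range m, (k : ℤ) ^ 2 + 12 * ∑ k ∈ Finset.range m, (k : ℤ) + 5 * m := by
  induction m with
  | zero => simp
  | succ m ih =>
    have h : 2 * (m + 1) + 1 = (2 * m + 1) + 1 + 1 := by ring
    rw [h, Finset.sum_range_succ, Finset.sum_range_succ, ih,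
      Finset.sum_range_succ, Finset.sum_range_succ (fun k => (k : ℤ))]
    push_cast
    ring

lemma pm_inj (m : ℕ) :
    Function.Injective (fun p : Equiv.Perm (Fin m) × (Fin m → Bool) => pm m p.1 p.2) := by
  rintro ⟨σ, c⟩ ⟨σ', c'⟩ h
  simp only at h
  have key : ∀ i : Fin m, σ i = σ' i ∧ c i = c' i := by
    intro i
    have h1 := congrArg (fun (p : Equiv.Perm (ZMod (2*m+1))) => p (E m (.inl (i, false)))) h
    simp only [pm_apply, blk_inl] at h1
    have h2 := (E m).injective h1
    simp only [Sum.inl.injEq, Prod.mk.injEq, Bool.false_xor] at h2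
    exact h2
  have h1 : σ = σ' := Equiv.ext fun i => (key i).1
  have h2 : c = c' := funext fun i => (key i).2
  simp [h1, h2]

def wf (m : ℕ) (σ σ' : Equiv.Perm (Fin m)) (c : Fin m → Bool) : A m → ℕ
  | .inl (i, b) => (σ i : ℕ) + (σ' i : ℕ) + 1 + cond (xor b (c i)) 1 0
  | .inr _ => 0

lemma keylem (m : ℕ) (σ σ' : Equiv.Perm (Fin m)) (c c' : Fin m → Bool)
    (hne : ¬ (σ = σ' ∧ c = c')) :
    ¬ Function.Bijective (fun x : ZMod (2 * m + 1) => pm m σ c x + pm m σ' c' x) := by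
  intro hbij
  by_cases hc : c = c'
  · -- main case: c = c', σ ≠ σ'
    subst hc
    have hσ : σ ≠ σ' := fun h => hne ⟨h, rfl⟩
    set w := wf m σ σ' c with hwdef
    -- key unit fact
    have hone : ((2 * m + 2 : ℕ) : ZMod (2 * m + 1)) = 1 := by
      have h : (2 * m + 2 : ℕ) = (2 * m + 1) + 1 := by ring
      rw [h, Nat.cast_add, ZMod.natCast_self, Nat.cast_one, zero_add]
    set g : A m → ZMod (2 * m + 1) :=
      fun a => (pm m σ c (E m a) + pm m σ' c (E m a) + 2) * ((m + 1 : ℕ) : ZMod (2 * m + 1))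
      with hgdef
    have hgw : ∀ a, g a = ((w a : ℕ) : ZMod (2 * m + 1)) := by
      intro a
      simp only [hgdef, hwdef]
      rcases a with ⟨i, b⟩ | u
      · simp only [pm_apply, blk_inl]
        simp only [E_apply, enc, wf]
        push_cast at hone
        rcases hx : xor b (c i) <;> simp only [hx, cond_true, cond_false] <;> push_cast
        · linear_combination (((σ i : ℕ) : ZMod (2*m+1)) + ((σ' i : ℕ) : ZMod (2*m+1)) + 1) * hone
        · linear_combination (((σ i : ℕ) : ZMod (2*m+1)) + ((σ' i : ℕ) : ZMod (2*m+1)) + 2) * hone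
      · simp only [pm_apply, blk_inr]
        simp only [E_apply, enc, wf]
        have h0 : ((2 * (2 * m + 1) : ℕ) : ZMod (2 * m + 1)) = 0 := by
          simp [Nat.cast_mul, ZMod.natCast_self]
        push_cast at h0 ⊢
        linear_combination ((m : ZMod (2*m+1)) + 1) * h0
    have hginj : Function.Injective g := by
      intro a a' hga
      have hmul := congrArg (· * (2 : ZMod (2 * m + 1))) hga
      simp only [hgdef] at hmul
      have h2 : ((m + 1 : ℕ) : ZMod (2 * m + 1)) * 2 = 1 := by
        rw [← hone]; push_cast; ring
      rw [mul_assoc, mul_assoc, h2, mul_one, mul_one, add_right_cancel_iff] at hmul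
      exact (E m).injective (hbij.injective hmul)
    have hwinj : Function.Injective w := by
      intro a a' h
      apply hginj
      rw [hgw, hgw, h]
    have hwlt : ∀ a, w a < 2 * m + 1 := by
      intro a
      rcases a with ⟨i, b⟩ | u
      · have h1 := (σ i).2
        have h2 := (σ' i).2
        simp only [hwdef, wf]
        rcases xor b (c i) <;> simp <;> omega
      · simp [hwdef, wf]
    have himg : Finset.image w Finset.univ = Finset.range (2 * m + 1) := by
      apply Finset.eq_of_subset_of_card_le
      · intro k hk
        simp only [Finset.mem_image, Finset.mem_univ, true_and] at hk
        obtain ⟨a, rfl⟩ := hk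
        exact Finset.mem_range.2 (hwlt a)
      · rw [Finset.card_image_of_injective _ hwinj, Finset.card_range, Finset.card_univ]
        simp
        omega
    have hsum : ∑ k ∈ Finset.range (2 * m + 1), (k : ℤ) ^ 2 = ∑ a : A m, ((w a : ℕ) : ℤ) ^ 2 := by
      rw [← himg, Finset.sum_image (fun x _ y _ h => hwinj h)]
    have hA : ∑ a : A m, ((w a : ℕ) : ℤ) ^ 2 =
        ∑ i : Fin m, ((((σ i : ℕ) : ℤ) + ((σ' i : ℕ) : ℤ) + 1) ^ 2 +
          (((σ i : ℕ) : ℤ) + ((σ' i : ℕ) : ℤ) + 2) ^ 2) := by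
      rw [Fintype.sum_sum_type, Fintype.sum_prod_type]
      have hz : ∑ u : Unit, ((w (Sum.inr u) : ℕ) : ℤ) ^ 2 = 0 := by
        simp [hwdef, wf]
      rw [hz, add_zero]
      apply Finset.sum_congr rfl
      intro i _
      rw [Fintype.sum_bool]
      rcases hci : c i <;> simp only [hwdef, wf, hci, Bool.xor_false, Bool.xor_true,
        Bool.not_true, Bool.not_false, cond_true, cond_false] <;> push_cast <;> ring
    -- permutation sums
    have hsσ : ∑ i : Fin m, ((σ i : ℕ) : ℤ) = ∑ i : Fin m, ((i : ℕ) : ℤ) :=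
      Equiv.sum_comp σ (fun i => ((i : ℕ) : ℤ))
    have hsσ' : ∑ i : Fin m, ((σ' i : ℕ) : ℤ) = ∑ i : Fin m, ((i : ℕ) : ℤ) :=
      Equiv.sum_comp σ' (fun i => ((i : ℕ) : ℤ))
    have hqσ : ∑ i : Fin m, ((σ i : ℕ) : ℤ) ^ 2 = ∑ i : Fin m, ((i : ℕ) : ℤ) ^ 2 :=
      Equiv.sum_comp σ (fun i => ((i : ℕ) : ℤ) ^ 2)
    have hqσ' : ∑ i : Fin m, ((σ' i : ℕ) : ℤ) ^ 2 = ∑ i : Fin m, ((i : ℕ) : ℤ) ^ 2 :=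
      Equiv.sum_comp σ' (fun i => ((i : ℕ) : ℤ) ^ 2)
    have hrS : ∑ i : Fin m, ((i : ℕ) : ℤ) = ∑ k ∈ Finset.range m, (k : ℤ) :=
      Fin.sum_univ_eq_sum_range (fun k => (k : ℤ)) m
    have hrT : ∑ i : Fin m, ((i : ℕ) : ℤ) ^ 2 = ∑ k ∈ Finset.range m, (k : ℤ) ^ 2 :=
      Fin.sum_univ_eq_sum_range (fun k => (k : ℤ) ^ 2) m
    -- combine everything
    have hpair : ∑ i : Fin m, ((((σ i : ℕ) : ℤ) + ((σ' i : ℕ) : ℤ) + 1) ^ 2 +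
          (((σ i : ℕ) : ℤ) + ((σ' i : ℕ) : ℤ) + 2) ^ 2) =
        8 * ∑ k ∈ Finset.range m, (k : ℤ) ^ 2 + 12 * ∑ k ∈ Finset.range m, (k : ℤ) + 5 * m := by
      rw [← hA, ← hsum, Qlem]
    have hcomb : 2 * ∑ i : Fin m, (((σ i : ℕ) : ℤ) - ((σ' i : ℕ) : ℤ)) ^ 2 +
        ∑ i : Fin m, ((((σ i : ℕ) : ℤ) + ((σ' i : ℕ) : ℤ) + 1) ^ 2 +
          (((σ i : ℕ) : ℤ) + ((σ' i : ℕ) : ℤ) + 2) ^ 2) =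
        ∑ i : Fin m, (4 * ((σ i : ℕ) : ℤ) ^ 2 + 4 * ((σ' i : ℕ) : ℤ) ^ 2 +
          6 * ((σ i : ℕ) : ℤ) + 6 * ((σ' i : ℕ) : ℤ) + 5) := by
      rw [Finset.mul_sum, ← Finset.sum_add_distrib]
      apply Finset.sum_congr rfl
      intro i _
      ring
    have hsplit : ∑ i : Fin m, (4 * ((σ i : ℕ) : ℤ) ^ 2 + 4 * ((σ' i : ℕ) : ℤ) ^ 2 +
          6 * ((σ i : ℕ) : ℤ) + 6 * ((σ' i : ℕ) : ℤ) + 5) =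
        4 * (∑ i : Fin m, ((σ i : ℕ) : ℤ) ^ 2) + 4 * (∑ i : Fin m, ((σ' i : ℕ) : ℤ) ^ 2) +
        6 * (∑ i : Fin m, ((σ i : ℕ) : ℤ)) + 6 * (∑ i : Fin m, ((σ' i : ℕ) : ℤ)) + 5 * m := by
      rw [Finset.sum_add_distrib, Finset.sum_add_distrib, Finset.sum_add_distrib,
        Finset.sum_add_distrib, ← Finset.mul_sum, ← Finset.mul_sum, ← Finset.mul_sum,
        ← Finset.mul_sum, Finset.sum_const, Finset.card_univ, Fintype.card_fin,
        nsmul_eq_mul]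
      ring
    have hD : ∑ i : Fin m, (((σ i : ℕ) : ℤ) - ((σ' i : ℕ) : ℤ)) ^ 2 = 0 := by
      rw [hpair, hsplit, hqσ, hqσ', hsσ, hsσ', hrT, hrS] at hcomb
      linarith
    have : σ = σ' := by
      apply Equiv.ext
      intro i
      have hterm := (Finset.sum_eq_zero_iff_of_nonneg (fun i _ => sq_nonneg _)).1 hD i
        (Finset.mem_univ i)
      have := pow_eq_zero_iff (n := 2) (by norm_num) |>.1 hterm
      have : ((σ i : ℕ) : ℤ) = ((σ' i : ℕ) : ℤ) := by linarith [sub_eq_zero.1 this]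
      exact Fin.ext (by exact_mod_cast this)
    exact hσ this
  · -- case: c ≠ c'
    obtain ⟨i, hci⟩ := Function.ne_iff.1 hc
    have hx12 : (E m (.inl (i, false)) : ZMod (2 * m + 1)) ≠ E m (.inl (i, true)) := by
      intro h
      simpa using (E m).injective h
    apply hx12
    apply hbij.injective
    show pm m σ c (E m (.inl (i, false))) + pm m σ' c' (E m (.inl (i, false))) =
      pm m σ c (E m (.inl (i, true))) + pm m σ' c' (E m (.inl (i, true)))
    simp only [pm_apply, blk_inl]
    simp only [E_apply, enc, Bool.false_xor, Bool.true_xor]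
    rcases h1 : c i <;> rcases h2 : c' i
    · simp [h1, h2] at hci
    · simp only [h1, h2, Bool.not_false, Bool.not_true, cond_true, cond_false]
      push_cast
      ring
    · simp only [h1, h2, Bool.not_false, Bool.not_true, cond_true, cond_false]
      push_cast
      ring
    · simp [h1, h2] at hci

end Stmt12Aux

theorem stmt12 (n : ℕ) (hn : Odd n) :
    ∃ P : Finset (Equiv.Perm (ZMod n)),
      P.card = 2 ^ ((n - 1) / 2) * ((n - 1) / 2).factorial ∧
      ∀ σ ∈ P, ∀ τ ∈ P, σ ≠ τ → ¬ Function.Bijective (fun i => σ i + τ i) := by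
  obtain ⟨m, rfl⟩ : ∃ m, n = 2 * m + 1 := by
    obtain ⟨k, hk⟩ := hn
    exact ⟨k, by omega⟩
  have hm : (2 * m + 1 - 1) / 2 = m := by omega
  refine ⟨Finset.image
    (fun p : Equiv.Perm (Fin m) × (Fin m → Bool) => Stmt12Aux.pm m p.1 p.2) Finset.univ,
    ?_, ?_⟩
  · rw [Finset.card_image_of_injective _ (Stmt12Aux.pm_inj m), Finset.card_univ, hm]
    simp [Fintype.card_perm]
    ring
  · intro σp hσp τp hτp hne
    simp only [Finset.mem_image, Finset.mem_univ, true_and] at hσp hτp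
    obtain ⟨⟨σ, c⟩, rfl⟩ := hσp
    obtain ⟨⟨τ, c'⟩, rfl⟩ := hτp
    apply Stmt12Aux.keylem
    rintro ⟨rfl, rfl⟩
    exact hne rfl
end

section
/- Let n be odd with k distinct prime divisors, and let s₁, ..., s_m be units of ZMod n such that for all i ≠ j, s_i + s_j is not a unit of ZMod n. Then m ≤ 2^k. -/
theorem stmt14 (n : ℕ) (hn : Odd n) (m : ℕ) (s : Fin m → (ZMod n)ˣ)
    (h : ∀ i j : Fin m, i ≠ j → ¬ IsUnit ((s i : ZMod n) + (s j : ZMod n))) :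
    m ≤ 2 ^ n.primeFactors.card := by
  have hn0 : n ≠ 0 := by rintro rfl; simp at hn
  haveI : NeZero n := ⟨hn0⟩
  classical
  set F : Fin m → ({p // p ∈ n.primeFactors} → Bool) := fun i p =>
    decide (2 * ((ZMod.castHom (Nat.dvd_of_mem_primeFactors p.2) (ZMod p.1))
      ((s i : ZMod n))).val < p.1) with hF
  have hinj : Function.Injective F := by
    intro i j hij
    by_contra hne
    have hnu := h i j hne
    obtain ⟨p, hp, hpn, hpd⟩ : ∃ p, p.Prime ∧ p ∣ n ∧
        p ∣ ((s i : ZMod n) + (s j : ZMod n)).val := by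
      have hcop : ¬ Nat.Coprime (((s i : ZMod n) + (s j : ZMod n)).val) n := by
        intro hc
        have := (ZMod.isUnit_iff_coprime (((s i : ZMod n) + (s j : ZMod n)).val) n).2 hc
        rw [ZMod.natCast_val, ZMod.cast_id] at this
        exact hnu this
      obtain ⟨p, hp, hpd⟩ := Nat.exists_prime_and_dvd hcop
      exact ⟨p, hp, hpd.trans (Nat.gcd_dvd_right _ _), hpd.trans (Nat.gcd_dvd_left _ _)⟩
    have hpmem : p ∈ n.primeFactors := Nat.mem_primeFactors.2 ⟨hp, hpn, hn0⟩
    haveI : Fact p.Prime := ⟨hp⟩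
    have hpodd : Odd p := by
      rcases hp.eq_two_or_odd' with h2 | hodd
      · exfalso
        subst h2
        obtain ⟨c, rfl⟩ := hpn
        have := Nat.odd_iff.mp hn
        omega
      · exact hodd
    set f := ZMod.castHom (Nat.dvd_of_mem_primeFactors hpmem) (ZMod p) with hf
    have hcast : ∀ x : ZMod n, f x = ((x.val : ℕ) : ZMod p) := by
      intro x
      rw [ZMod.castHom_apply, ← ZMod.natCast_val]
    have hzero : f (s i : ZMod n) + f (s j : ZMod n) = 0 := by
      rw [← map_add, hcast]
      exact (ZMod.natCast_eq_zero_iff _ _).2 hpd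
    have hneg : f (s j : ZMod n) = - f (s i : ZMod n) := by linear_combination hzero
    have haunit : IsUnit (f (s i : ZMod n)) := (s i).isUnit.map f
    have hane : f (s i : ZMod n) ≠ 0 := haunit.ne_zero
    have hvalneg : (- f (s i : ZMod n)).val = p - (f (s i : ZMod n)).val := by
      rw [ZMod.neg_val, if_neg hane]
    have hvallt : (f (s i : ZMod n)).val < p := ZMod.val_lt _
    have hvalne : (f (s i : ZMod n)).val ≠ 0 := by
      simpa [ZMod.val_eq_zero] using hane
    have hcoord := congrFun hij ⟨p, hpmem⟩
    simp only [hF, decide_eq_decide] at hcoord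
    rw [show (ZMod.castHom (Nat.dvd_of_mem_primeFactors hpmem) (ZMod p)) = f from rfl] at hcoord
    rw [hneg, hvalneg] at hcoord
    have hp2 : p % 2 = 1 := Nat.odd_iff.mp hpodd
    omega
  calc m = Fintype.card (Fin m) := (Fintype.card_fin m).symm
    _ ≤ Fintype.card ({p // p ∈ n.primeFactors} → Bool) := Fintype.card_le_of_injective F hinj
    _ = 2 ^ n.primeFactors.card := by
        rw [Fintype.card_fun, Fintype.card_bool, Fintype.card_coe]
end

section
/- For any n ≥ 2, if P is a set of permutations of ZMod n such that for any two distinct σ, τ ∈ P the pointwise difference i ↦ σ i - τ i is a permutation of ZMod n, and |P| ≥ 2, then |P| ≤ n - 1. -/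
theorem stmt18 (n : ℕ) (hn : 2 ≤ n) (P : Finset (Equiv.Perm (ZMod n)))
    (h : ∀ σ ∈ P, ∀ τ ∈ P, σ ≠ τ → Function.Bijective (fun i => σ i - τ i))
    (hP : 2 ≤ P.card) : P.card ≤ n - 1 := by
  haveI : Fact (1 < n) := ⟨hn⟩
  have h01 : (0 : ZMod n) ≠ 1 := zero_ne_one
  have key : P.card ≤ ((Finset.univ : Finset (ZMod n)).erase 0).card := by
    apply Finset.card_le_card_of_injOn (fun σ => σ 1 - σ 0)
    · intro σ hσ
      simp only [Finset.mem_coe, Finset.mem_erase, Finset.mem_univ, and_true]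
      exact sub_ne_zero.mpr (fun e => h01 (σ.injective e).symm)
    · intro σ hσ τ hτ heq
      by_contra hne
      have hb := (h σ hσ τ hτ hne).injective
      have : σ 1 - τ 1 = σ 0 - τ 0 := by
        have := heq
        ring_nf at this ⊢
        linear_combination this
      have := hb this
      exact h01 this.symm
  calc P.card ≤ ((Finset.univ : Finset (ZMod n)).erase 0).card := key
    _ = Fintype.card (ZMod n) - 1 := by
        rw [Finset.card_erase_of_mem (Finset.mem_univ _), Finset.card_univ]
    _ = n - 1 := by rw [ZMod.card]
end
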